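/- Let (F, d_F) be a metric space. Define on [0, ∞) × F the function d_C((r,x),(s,y)) = √(r² + s² − 2·r·s·cos(min(d_F(x,y), π))). Then d_C is a pseudometric: it is nonnegative, symmetric, satisfies d_C((r,x),(r,x)) = 0, and satisfies the triangle inequality; moreover d_C((r,x),(s,y)) = 0 if and only if r = s = 0 or (r = s and d_F(x,y) = 0). -/

import Mathlib

/-!
Write `coneDist r s θ = √(r² + s² - 2 r s cos θ)`; by the law of cosines this is the distance
in `ℂ` between `r` and `s e^{iθ}`, so the planar triangle inequality gives
`coneDist r t (α + β) ≤ coneDist r s α + coneDist s t β`. On `[0, π]` the function is monotone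
in `θ`, which lets one pass to the truncated angle `min (d(x, z)) π ≤ min (α + β) π` after
shrinking `α` so that the angle sum stays at most `π`. The value vanishes only when `r = s` and
`r s (1 - cos θ) = 0`, since `r² + s² - 2 r s cos θ = (r - s)² + 2 r s (1 - cos θ)`.
-/

open Real

noncomputable def coneDist (r s θ : ℝ) : ℝ :=
  √(r ^ 2 + s ^ 2 - 2 * r * s * cos θ)

lemma coneDist_comm (r s θ : ℝ) : coneDist r s θ = coneDist s r θ := by
  unfold coneDist; ring_nf

lemma coneDist_self_zero (r : ℝ) : coneDist r r 0 = 0 := by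
  rw [coneDist, cos_zero, show r ^ 2 + r ^ 2 - 2 * r * r * 1 = 0 by ring, sqrt_zero]

lemma coneDist_eq_norm (r s θ : ℝ) :
    coneDist r s θ = ‖(r : ℂ) - s * Complex.exp (θ * Complex.I)‖ := by
  rw [coneDist, Complex.norm_def]
  congr 1
  simp [Complex.normSq_apply, Complex.exp_mul_I, Complex.cos_ofReal_re, Complex.sin_ofReal_re]
  nlinarith [sin_sq_add_cos_sq θ]

lemma coneDist_angle_add_le (r s t α β : ℝ) :
    coneDist r t (α + β) ≤ coneDist r s α + coneDist s t β := by
  have rotate : (s : ℂ) * Complex.exp (α * Complex.I) - t * Complex.exp ((α + β : ℝ) * Complex.I)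
      = Complex.exp (α * Complex.I) * ((s : ℂ) - t * Complex.exp (β * Complex.I)) := by
    push_cast
    rw [add_mul, Complex.exp_add]
    ring
  calc coneDist r t (α + β)
      ≤ ‖(r : ℂ) - s * Complex.exp (α * Complex.I)‖
        + ‖(s : ℂ) * Complex.exp (α * Complex.I) - t * Complex.exp ((α + β : ℝ) * Complex.I)‖ := by
        rw [coneDist_eq_norm]; exact norm_sub_le_norm_sub_add_norm_sub _ _ _
    _ = coneDist r s α + coneDist s t β := by
        rw [rotate, norm_mul, Complex.norm_exp_ofReal_mul_I, one_mul, coneDist_eq_norm,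
          coneDist_eq_norm]

lemma coneDist_mono {r s θ₁ θ₂ : ℝ} (hr : 0 ≤ r) (hs : 0 ≤ s) (h₀ : 0 ≤ θ₁) (h₁₂ : θ₁ ≤ θ₂)
    (hπ : θ₂ ≤ π) : coneDist r s θ₁ ≤ coneDist r s θ₂ := by
  apply sqrt_le_sqrt
  have := cos_le_cos_of_nonneg_of_le_pi h₀ hπ h₁₂
  nlinarith [mul_nonneg hr hs]

lemma coneDist_le_add_of_le_min_add {r s t α β γ : ℝ} (hr : 0 ≤ r) (hs : 0 ≤ s) (ht : 0 ≤ t)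
    (hα₀ : 0 ≤ α) (hαπ : α ≤ π) (hβπ : β ≤ π) (hγ₀ : 0 ≤ γ) (hγ : γ ≤ min (α + β) π) :
    coneDist r t γ ≤ coneDist r s α + coneDist s t β := by
  set α' := min α (π - β)
  have hα'₀ : 0 ≤ α' := le_min hα₀ (by linarith)
  have hγα' : γ ≤ min α (π - β) + β := by
    rcases min_cases α (π - β) with ⟨h, -⟩ | ⟨h, -⟩ <;> rw [h] <;>
      linarith [min_le_left (α + β) π, min_le_right (α + β) π]
  calc coneDist r t γ
      ≤ coneDist r t (α' + β) := coneDist_mono hr ht hγ₀ hγα' (by linarith [min_le_right α (π - β)])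
    _ ≤ coneDist r s α' + coneDist s t β := coneDist_angle_add_le r s t α' β
    _ ≤ coneDist r s α + coneDist s t β := by
        gcongr; exact coneDist_mono hr hs hα'₀ (min_le_left _ _) hαπ

lemma coneDist_eq_zero_iff {r s θ : ℝ} (hr : 0 ≤ r) (hs : 0 ≤ s) (hθ₀ : 0 ≤ θ) (hθπ : θ ≤ π) :
    coneDist r s θ = 0 ↔ r = 0 ∧ s = 0 ∨ r = s ∧ θ = 0 := by
  have split : r ^ 2 + s ^ 2 - 2 * r * s * cos θ = (r - s) ^ 2 + 2 * (r * s) * (1 - cos θ) := by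
    ring
  have hrs : 0 ≤ r * s := mul_nonneg hr hs
  have hcos : 0 ≤ 1 - cos θ := by linarith [cos_le_one θ]
  rw [coneDist, sqrt_eq_zero (by nlinarith), split]
  constructor
  · intro h
    have hsq : (r - s) ^ 2 = 0 := by nlinarith [sq_nonneg (r - s), mul_nonneg hrs hcos]
    have hrs' : r = s := by nlinarith [sq_eq_zero_iff.mp hsq]
    subst hrs'
    rcases eq_or_lt_of_le hr with hr0 | hrpos
    · exact Or.inl ⟨hr0.symm, hr0.symm⟩
    · have hcos1 : cos θ = cos 0 := by
        rw [cos_zero]; nlinarith [mul_pos hrpos hrpos]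
      exact Or.inr ⟨rfl, injOn_cos ⟨hθ₀, hθπ⟩ ⟨le_rfl, pi_pos.le⟩ hcos1⟩
  · rintro (⟨rfl, rfl⟩ | ⟨rfl, rfl⟩) <;> simp

lemma min_dist_le_add {X : Type*} [PseudoMetricSpace X] {c : ℝ} (hc : 0 ≤ c) (x y z : X) :
    min (dist x z) c ≤ min (dist x y) c + min (dist y z) c := by
  have := dist_triangle x y z
  rcases min_cases (dist x y) c with ⟨h₁, -⟩ | ⟨h₁, -⟩ <;>
    rcases min_cases (dist y z) c with ⟨h₂, -⟩ | ⟨h₂, -⟩ <;> rw [h₁, h₂] <;>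
    linarith [min_le_left (dist x z) c, min_le_right (dist x z) c, dist_nonneg (x := x) (y := y),
      dist_nonneg (x := y) (y := z)]

theorem stmt_10 {F : Type*} [MetricSpace F]
    (dC : ℝ × F → ℝ × F → ℝ)
    (hdC : ∀ p q : ℝ × F, dC p q =
      Real.sqrt (p.1 ^ 2 + q.1 ^ 2
        - 2 * p.1 * q.1 * Real.cos (min (dist p.2 q.2) Real.pi))) :
    (∀ p q : ℝ × F, 0 ≤ p.1 → 0 ≤ q.1 → 0 ≤ dC p q) ∧
    (∀ p q : ℝ × F, dC p q = dC q p) ∧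
    (∀ p : ℝ × F, dC p p = 0) ∧
    (∀ p q z : ℝ × F, 0 ≤ p.1 → 0 ≤ q.1 → 0 ≤ z.1 → dC p z ≤ dC p q + dC q z) ∧
    (∀ p q : ℝ × F, 0 ≤ p.1 → 0 ≤ q.1 →
      (dC p q = 0 ↔ (p.1 = 0 ∧ q.1 = 0) ∨ (p.1 = q.1 ∧ dist p.2 q.2 = 0))) := by
  obtain rfl : dC = fun p q ↦ coneDist p.1 q.1 (min (dist p.2 q.2) π) := funext₂ hdC
  have angle_nonneg (x y : F) : 0 ≤ min (dist x y) π := le_min dist_nonneg pi_pos.le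
  have angle_le_pi (x y : F) : min (dist x y) π ≤ π := min_le_right _ _
  refine ⟨fun p q _ _ ↦ sqrt_nonneg _, fun p q ↦ ?_, fun p ↦ ?_, fun p q z hp hq hz ↦ ?_,
    fun p q hp hq ↦ ?_⟩
  · simp only [dist_comm p.2, coneDist_comm p.1]
  · simp [pi_pos.le, coneDist_self_zero]
  · exact coneDist_le_add_of_le_min_add hp hq hz (angle_nonneg _ _) (angle_le_pi _ _)
      (angle_le_pi _ _) (angle_nonneg _ _)
      (le_min (min_dist_le_add pi_pos.le _ _ _) (angle_le_pi _ _))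
  · have angle_eq_zero : min (dist p.2 q.2) π = 0 ↔ dist p.2 q.2 = 0 := by
      simp only [min_eq_iff, pi_ne_zero, false_and, or_false]
      exact and_iff_left_of_imp fun h ↦ h ▸ pi_pos.le
    rw [coneDist_eq_zero_iff hp hq (angle_nonneg _ _) (angle_le_pi _ _), angle_eq_zero]
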